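/- For any finite simple graph G=(V,E), Σ_{S ⊆ V} min_{y ∈ core(G_0[Π(S)])}(1 − y_α) equals the number of vertex covers of G; equivalently, the expected value of min_{y ∈ core(G_0[Π(S)])}(1 − y_α) when S is a uniformly random subset of V equals (number of vertex covers of G)/2^{|V|}. -/

import Mathlib

/-- A finite graph: a finite vertex set and a finite set of (oriented representatives of) edges. -/
structure FinGraph (α : Type*) where
  verts : Finset α
  edges : Finset (α × α)

namespace FinGraph

variable {α : Type*}

/-- A matching: a set of edges of `G` that are pairwise vertex-disjoint. -/
def IsMatching (G : FinGraph α) (M : Finset (α × α)) : Prop :=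
  M ⊆ G.edges ∧ ∀ e ∈ M, ∀ f ∈ M, e ≠ f →
    e.1 ≠ f.1 ∧ e.1 ≠ f.2 ∧ e.2 ≠ f.1 ∧ e.2 ≠ f.2

open Classical in
/-- `ν(G)`: the maximum cardinality of a matching of `G`. -/
noncomputable def nu (G : FinGraph α) : ℕ :=
  (G.edges.powerset.filter fun M => G.IsMatching M).sup Finset.card

/-- Well-formedness: edges join two distinct vertices of the graph. -/
def WF (G : FinGraph α) : Prop :=
  ∀ e ∈ G.edges, e.1 ∈ G.verts ∧ e.2 ∈ G.verts ∧ e.1 ≠ e.2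

/-- `G` is bipartite with parts `V1`, `V2` (edges oriented from `V1` to `V2`). -/
def Bipartition [DecidableEq α] (G : FinGraph α) (V1 V2 : Finset α) : Prop :=
  G.verts ⊆ V1 ∪ V2 ∧ ∀ e ∈ G.edges, e.1 ∈ V1 ∧ e.2 ∈ V2

/-- The core of the assignment game on `G`: minimum fractional vertex covers of value `ν(G)`. -/
noncomputable def core (G : FinGraph α) : Set (α → ℝ) :=
  {y | (∀ v ∈ G.verts, 0 ≤ y v) ∧ (∀ e ∈ G.edges, 1 ≤ y e.1 + y e.2) ∧
    ∑ v ∈ G.verts, y v = (G.nu : ℝ)}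

/-- The subgraph of `G` induced by the vertex set `U`. -/
def induce [DecidableEq α] (G : FinGraph α) (U : Finset α) : FinGraph α :=
  ⟨G.verts ∩ U, G.edges.filter fun e => e.1 ∈ U ∧ e.2 ∈ U⟩

end FinGraph

/-- A real number is integral if it is an integer. -/
def IntegralReal (x : ℝ) : Prop := ∃ n : ℤ, x = (n : ℝ)

open FinGraph

variable {V : Type*} [Fintype V] [DecidableEq V]

/-- The degree of `v`: the number of edges of `E` containing `v`. -/
def degE (E : Finset (Sym2 V)) (v : V) : ℕ := (E.filter fun e => v ∈ e).card

/-- The vertex universe of the hardness-reduction graph: copies `(v, j)` of original vertices,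
edge-vertices, and three extra vertices `α = redAlpha`, `β₁ = redBeta1`, `β₂ = redBeta2`. -/
abbrev RedVert (V : Type*) : Type _ := (V × ℕ) ⊕ (Sym2 V ⊕ Fin 3)

/-- The copy-vertex `v_j`. -/
def redCopy (v : V) (j : ℕ) : RedVert V := Sum.inl (v, j)

/-- The edge-vertex corresponding to `e`. -/
def redEdgeVert (e : Sym2 V) : RedVert V := Sum.inr (Sum.inl e)

/-- The special vertex `α`. -/
def redAlpha (V : Type*) : RedVert V := Sum.inr (Sum.inr 0)

/-- The special vertex `β₁`. -/
def redBeta1 (V : Type*) : RedVert V := Sum.inr (Sum.inr 1)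

/-- The special vertex `β₂`. -/
def redBeta2 (V : Type*) : RedVert V := Sum.inr (Sum.inr 2)

/-- The hardness-reduction graph `G₀` built from the graph `G = (V, E)`:
vertices are the copies `v_1, …, v_{d_v}` for `v ∈ V`, the edge-vertices `e ∈ E`, and
`α, β₁, β₂`; edges join each edge-vertex `e` to every copy of each endpoint of `e`, and `α`
to every edge-vertex and to `β₁` and `β₂`. -/
def redGraph (E : Finset (Sym2 V)) : FinGraph (RedVert V) where
  verts :=
    (Finset.univ.biUnion fun v : V =>
        (Finset.range (degE E v)).image fun j => redCopy v j)
      ∪ E.image redEdgeVert ∪ {redAlpha V, redBeta1 V, redBeta2 V}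
  edges :=
    (E.biUnion fun e =>
        (Finset.univ.filter fun v : V => v ∈ e).biUnion fun v =>
          (Finset.range (degE E v)).image fun j => (redEdgeVert e, redCopy v j))
      ∪ E.image (fun e => (redAlpha V, redEdgeVert e))
      ∪ {(redAlpha V, redBeta1 V), (redAlpha V, redBeta2 V)}

/-- `Π(S)`: the copies of the vertices of `S`, all edge-vertices, and `α`. -/
def redPi (E : Finset (Sym2 V)) (S : Finset V) : Finset (RedVert V) :=
  (S.biUnion fun v => (Finset.range (degE E v)).image fun j => redCopy v j)
    ∪ E.image redEdgeVert ∪ {redAlpha V}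

/-- `S` is a vertex cover of `(V, E)`. -/
def IsVCover (E : Finset (Sym2 V)) (S : Finset V) : Prop :=
  ∀ e ∈ E, ∃ v ∈ S, v ∈ e

attribute [local instance] Classical.propDecidable

/-!
Everything is weak LP duality between matchings and fractional vertex covers of
`H = G₀[Π(S)]`. Let `E_S` be the set of edges covered by `S`. Since a vertex `v` has one copy
per incident edge, every covered edge-vertex can be matched to its own copy of an endpoint in
`S`; if some edge `e₀` is uncovered, `α e₀` can be added. Putting weight `1` on the covered
edge-vertices and, when `S` is not a vertex cover, on `α` gives a fractional vertex cover of the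
same value, so `ν(H) = |E_S| + [S is not a cover]` and this weighting lies in the core.
Conversely the copy matching leaves `α` unmatched, so every `y` in the core satisfies
`|E_S| + y_α ≤ Σ y = ν(H)`. Hence the minimum of `1 - y_α` is the indicator of `S` being a
vertex cover.
-/

namespace FinGraph

variable {α : Type*} {G : FinGraph α} {M : Finset (α × α)} {y : α → ℝ}

def IsFracCover (G : FinGraph α) (y : α → ℝ) : Prop :=
  (∀ v ∈ G.verts, 0 ≤ y v) ∧ ∀ e ∈ G.edges, 1 ≤ y e.1 + y e.2

theorem mem_core_iff : y ∈ G.core ↔ G.IsFracCover y ∧ ∑ v ∈ G.verts, y v = G.nu :=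
  and_assoc.symm

theorem IsMatching.insert [DecidableEq α] {p : α × α} (hM : G.IsMatching M) (hp : p ∈ G.edges)
    (hpM : ∀ q ∈ M, p.1 ≠ q.1 ∧ p.1 ≠ q.2 ∧ p.2 ≠ q.1 ∧ p.2 ≠ q.2) :
    G.IsMatching (insert p M) := by
  refine ⟨Finset.insert_subset hp hM.1, ?_⟩
  simp only [Finset.mem_insert]
  rintro e (rfl | he) f (rfl | hf) hef
  · exact absurd rfl hef
  · exact hpM f hf
  · obtain ⟨h1, h2, h3, h4⟩ := hpM e he
    exact ⟨h1.symm, h3.symm, h2.symm, h4.symm⟩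
  · exact hM.2 e he f hf hef

theorem IsMatching.card_add_sum_le (hG : G.WF) (hM : G.IsMatching M) (hy : G.IsFracCover y)
    {U : Finset α} (hU : U ⊆ G.verts) (hUM : ∀ p ∈ M, p.1 ∉ U ∧ p.2 ∉ U) :
    (M.card : ℝ) + ∑ u ∈ U, y u ≤ ∑ v ∈ G.verts, y v := by
  set D := M.biUnion fun p => {p.1, p.2}
  have hsumD : ∑ v ∈ D, y v = ∑ p ∈ M, (y p.1 + y p.2) := by
    rw [Finset.sum_biUnion]
    · refine Finset.sum_congr rfl fun p hp => Finset.sum_pair (hG p (hM.1 hp)).2.2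
    · intro p hp q hq hpq
      obtain ⟨h1, h2, h3, h4⟩ := hM.2 p hp q hq hpq
      simp [Finset.disjoint_left, *, Ne.symm]
  have hcard : (M.card : ℝ) ≤ ∑ p ∈ M, (y p.1 + y p.2) := by
    rw [Finset.card_eq_sum_ones, Nat.cast_sum, Nat.cast_one]
    exact Finset.sum_le_sum fun p hp => hy.2 p (hM.1 hp)
  have hDU : Disjoint D U := by
    simp only [D, Finset.disjoint_biUnion_left]
    intro p hp
    simp [(hUM p hp).1, (hUM p hp).2]
  have hDUV : D ∪ U ⊆ G.verts := by
    refine Finset.union_subset ?_ hU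
    simp only [D, Finset.biUnion_subset]
    intro p hp
    simp [Finset.insert_subset_iff, (hG p (hM.1 hp)).1, (hG p (hM.1 hp)).2.1]
  calc (M.card : ℝ) + ∑ u ∈ U, y u ≤ ∑ v ∈ D ∪ U, y v := by
        rw [Finset.sum_union hDU, hsumD]; linarith
    _ ≤ ∑ v ∈ G.verts, y v :=
        Finset.sum_le_sum_of_subset_of_nonneg hDUV fun v hv _ => hy.1 v hv

theorem IsMatching.card_le_nu (hM : G.IsMatching M) : M.card ≤ G.nu :=
  Finset.le_sup (f := Finset.card) (Finset.mem_filter.2 ⟨Finset.mem_powerset.2 hM.1, hM⟩)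

theorem exists_isMatching_card_eq_nu (G : FinGraph α) :
    ∃ M, G.IsMatching M ∧ M.card = G.nu := by
  obtain ⟨M, hM, hMnu⟩ := Finset.exists_mem_eq_sup
    (G.edges.powerset.filter fun M => G.IsMatching M)
    ⟨∅, by simp [IsMatching]⟩ Finset.card
  exact ⟨M, (Finset.mem_filter.1 hM).2, hMnu.symm⟩

theorem nu_le_sum (hG : G.WF) (hy : G.IsFracCover y) : (G.nu : ℝ) ≤ ∑ v ∈ G.verts, y v := by
  obtain ⟨M, hM, hMnu⟩ := G.exists_isMatching_card_eq_nu
  simpa [hMnu] using hM.card_add_sum_le hG hy (Finset.empty_subset _) (by simp)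

theorem nu_eq_of_sum_eq_card (hG : G.WF) (hy : G.IsFracCover y) (hM : G.IsMatching M)
    (hsum : ∑ v ∈ G.verts, y v = M.card) : G.nu = M.card :=
  le_antisymm (by exact_mod_cast hsum ▸ nu_le_sum hG hy) hM.card_le_nu

end FinGraph

theorem Finset.exists_injOn_lt_card {β : Type*} (s : Finset β) :
    ∃ f : β → ℕ, Set.InjOn f s ∧ ∀ x ∈ s, f x < s.card := by
  refine ⟨fun x => if h : x ∈ s then (s.equivFin ⟨x, h⟩ : ℕ) else 0, ?_, ?_⟩
  · intro x hx x' hx' hxx'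
    simp only [Finset.mem_coe] at hx hx'
    simp only [dif_pos hx, dif_pos hx'] at hxx'
    exact congrArg Subtype.val (s.equivFin.injective (Fin.ext hxx'))
  · intro x hx
    simp [dif_pos hx]

section
variable {W : Type*} [DecidableEq W] (E : Finset (Sym2 W)) (S : Finset W)

def coveredEdges : Finset (Sym2 W) := E.filter fun e => ∃ v ∈ S, v ∈ e

theorem exists_injOn_coveredEdges_copy :
    ∃ w : Sym2 W → W × ℕ, Set.InjOn w (coveredEdges E S) ∧
    ∀ e ∈ coveredEdges E S, (w e).1 ∈ S ∧ (w e).1 ∈ e ∧ (w e).2 < degE E (w e).1 := by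
  have hsel : ∀ e : Sym2 W, ∃ v : W, e ∈ coveredEdges E S → v ∈ S ∧ v ∈ e := by
    intro e
    by_cases h : ∃ v ∈ S, v ∈ e
    · obtain ⟨v, hv⟩ := h
      exact ⟨v, fun _ => hv⟩
    · exact ⟨e.out.1, fun he => absurd (Finset.mem_filter.1 he).2 h⟩
  choose sel hsel using hsel
  choose idx hidx using fun v : W => (E.filter (v ∈ ·)).exists_injOn_lt_card
  have hmem : ∀ e ∈ coveredEdges E S, e ∈ E.filter (sel e ∈ ·) := fun e he =>
    Finset.mem_filter.2 ⟨(Finset.mem_filter.1 he).1, (hsel e he).2⟩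
  refine ⟨fun e => (sel e, idx (sel e) e), ?_, fun e he =>
    ⟨(hsel e he).1, (hsel e he).2, (hidx _).2 e (hmem e he)⟩⟩
  intro e he f hf hef
  obtain ⟨hsel_eq, hidx_eq⟩ := Prod.mk.inj hef
  rw [← hsel_eq] at hidx_eq
  exact (hidx (sel e)).1 (hmem e he) (hsel_eq ▸ hmem f hf) hidx_eq

theorem mem_redPi {x : RedVert W} :
    x ∈ redPi E S ↔ x = redAlpha W ∨ (∃ v ∈ S, ∃ j < degE E v, redCopy v j = x) ∨
      ∃ e ∈ E, redEdgeVert e = x := by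
  simp [redPi]

theorem sum_redPi (y : RedVert W → ℝ) :
    ∑ x ∈ redPi E S, y x = ∑ v ∈ S, ∑ j ∈ Finset.range (degE E v), y (redCopy v j) +
      ∑ e ∈ E, y (redEdgeVert e) + y (redAlpha W) := by
  rw [redPi, Finset.sum_union, Finset.sum_union, Finset.sum_biUnion, Finset.sum_singleton,
    Finset.sum_image]
  · congr 1; congr 1
    refine Finset.sum_congr rfl fun v _ => Finset.sum_image ?_
    intro a _ b _ h
    simpa [redCopy] using h
  · intro a _ b _ h
    simpa [redEdgeVert] using h
  · intro v _ w _ hvw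
    simp [Function.onFun, Finset.disjoint_left, redCopy, Ne.symm hvw]
  · simp [Finset.disjoint_left, redCopy, redEdgeVert]
  · simp [Finset.disjoint_left, redCopy, redEdgeVert, redAlpha]

noncomputable def coverWeight : RedVert W → ℝ
  | Sum.inl _ => 0
  | Sum.inr (Sum.inl e) => if ∃ v ∈ S, v ∈ e then 1 else 0
  | Sum.inr (Sum.inr _) => if IsVCover E S then 0 else 1

theorem sum_redPi_coverWeight :
    ∑ x ∈ redPi E S, coverWeight E S x =
      (coveredEdges E S).card + if IsVCover E S then 0 else 1 := by
  rw [sum_redPi]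
  simp only [coverWeight, redCopy, redEdgeVert, redAlpha, Finset.sum_const_zero, zero_add]
  rw [Finset.sum_boole, coveredEdges]

end

section

variable (E : Finset (Sym2 V)) (S : Finset V)

theorem induce_redPi_verts : ((redGraph E).induce (redPi E S)).verts = redPi E S := by
  refine Finset.inter_eq_right.2 fun x hx => ?_
  rcases (mem_redPi E S).1 hx with rfl | ⟨v, -, j, hj, rfl⟩ | ⟨e, he, rfl⟩
  · simp [redGraph]
  · exact Finset.mem_union_left _ (Finset.mem_union_left _ (Finset.mem_biUnion.2
      ⟨v, Finset.mem_univ v, Finset.mem_image_of_mem _ (Finset.mem_range.2 hj)⟩))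
  · exact Finset.mem_union_left _ (Finset.mem_union_right _ (Finset.mem_image_of_mem _ he))

theorem mem_induce_redPi_edges {p : RedVert V × RedVert V} :
    p ∈ ((redGraph E).induce (redPi E S)).edges ↔
      (∃ e ∈ E, ∃ v ∈ S, v ∈ e ∧ ∃ j < degE E v, p = (redEdgeVert e, redCopy v j)) ∨
      ∃ e ∈ E, p = (redAlpha V, redEdgeVert e) := by
  simp only [induce, redGraph, Finset.mem_filter, mem_redPi, Finset.mem_union,
    Finset.mem_biUnion, Finset.mem_image, Finset.mem_insert, Finset.mem_singleton,
    Finset.mem_range, Finset.mem_univ, true_and]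
  constructor
  · rintro ⟨((⟨e, he, v, hv, j, hj, rfl⟩ | ⟨e, he, rfl⟩) | rfl | rfl), -, h2⟩
    · obtain ⟨hvS, -⟩ : v ∈ S ∧ j < degE E v := by
        simpa [redCopy, redEdgeVert, redAlpha] using h2
      exact Or.inl ⟨e, he, v, hvS, hv, j, hj, rfl⟩
    · exact Or.inr ⟨e, he, rfl⟩
    all_goals simp [redCopy, redEdgeVert, redAlpha, redBeta1, redBeta2] at h2
  · rintro (⟨e, he, v, hvS, hv, j, hj, rfl⟩ | ⟨e, he, rfl⟩)
    · exact ⟨Or.inl (Or.inl ⟨e, he, v, hv, j, hj, rfl⟩), Or.inr (Or.inr ⟨e, he, rfl⟩),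
        Or.inr (Or.inl ⟨v, hvS, j, hj, rfl⟩)⟩
    · exact ⟨Or.inl (Or.inr ⟨e, he, rfl⟩), Or.inl rfl, Or.inr (Or.inr ⟨e, he, rfl⟩)⟩

theorem wf_induce_redPi : ((redGraph E).induce (redPi E S)).WF := by
  intro p hp
  rw [induce_redPi_verts, mem_redPi, mem_redPi]
  rcases (mem_induce_redPi_edges E S).1 hp with
    ⟨e, he, v, hvS, -, j, hj, rfl⟩ | ⟨e, he, rfl⟩
  · exact ⟨Or.inr (Or.inr ⟨e, he, rfl⟩), Or.inr (Or.inl ⟨v, hvS, j, hj, rfl⟩), by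
      simp [redEdgeVert, redCopy]⟩
  · exact ⟨Or.inl rfl, Or.inr (Or.inr ⟨e, he, rfl⟩), by simp [redEdgeVert, redAlpha]⟩

theorem isFracCover_coverWeight :
    ((redGraph E).induce (redPi E S)).IsFracCover (coverWeight E S) := by
  refine ⟨fun x _ => ?_, fun p hp => ?_⟩
  · rcases x with _ | _ | _ <;> simp only [coverWeight] <;> positivity
  · rcases (mem_induce_redPi_edges E S).1 hp with
      ⟨e, -, v, hvS, hv, j, -, rfl⟩ | ⟨e, he, rfl⟩
    · simp [coverWeight, redEdgeVert, redCopy, if_pos (⟨v, hvS, hv⟩ : ∃ v ∈ S, v ∈ e)]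
    · by_cases hc : IsVCover E S
      · simp [coverWeight, redEdgeVert, redAlpha, hc, if_pos (hc e he)]
      · simp only [coverWeight, redEdgeVert, redAlpha, if_neg hc]
        split_ifs <;> norm_num

theorem exists_isMatching_card_coveredEdges :
    ∃ M, ((redGraph E).induce (redPi E S)).IsMatching M ∧
    M.card = (coveredEdges E S).card ∧
    ∀ p ∈ M, ∃ e ∈ coveredEdges E S, ∃ c, p = (redEdgeVert e, Sum.inl c) := by
  obtain ⟨w, hinj, hw⟩ := exists_injOn_coveredEdges_copy E S
  refine ⟨(coveredEdges E S).image fun e => (redEdgeVert e, Sum.inl (w e)),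
    ⟨?_, ?_⟩, ?_, ?_⟩
  · intro p hp
    obtain ⟨e, he, rfl⟩ := Finset.mem_image.1 hp
    obtain ⟨hvS, hv, hj⟩ := hw e he
    exact (mem_induce_redPi_edges E S).2
      (Or.inl ⟨e, (Finset.mem_filter.1 he).1, _, hvS, hv, _, hj, rfl⟩)
  · simp only [Finset.mem_image]
    rintro _ ⟨e, he, rfl⟩ _ ⟨f, hf, rfl⟩ hef
    have hef' : e ≠ f := fun h => hef (h ▸ rfl)
    refine ⟨by simpa [redEdgeVert] using hef', by simp [redEdgeVert], by simp [redEdgeVert], ?_⟩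
    simpa using fun h => hef' (hinj he hf h)
  · refine Finset.card_image_of_injective _ fun e f h => ?_
    simpa [redEdgeVert] using congrArg Prod.fst h
  · simp only [Finset.mem_image]
    rintro _ ⟨e, he, rfl⟩
    exact ⟨e, he, w e, rfl⟩

theorem exists_isMatching_card_coveredEdges_add :
    ∃ M, ((redGraph E).induce (redPi E S)).IsMatching M ∧
    (M.card : ℝ) = (coveredEdges E S).card + if IsVCover E S then 0 else 1 := by
  obtain ⟨M, hM, hcard, hshape⟩ := exists_isMatching_card_coveredEdges E S
  by_cases hc : IsVCover E S
  · exact ⟨M, hM, by simp [hcard, hc]⟩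
  obtain ⟨e₀, he₀, hunc⟩ : ∃ e₀ ∈ E, ¬ ∃ v ∈ S, v ∈ e₀ := by
    simpa [IsVCover] using hc
  have hdisj : ∀ q ∈ M, redAlpha V ≠ q.1 ∧ redAlpha V ≠ q.2 ∧
      redEdgeVert e₀ ≠ q.1 ∧ redEdgeVert e₀ ≠ q.2 := by
    intro q hq
    obtain ⟨e, he, c, rfl⟩ := hshape q hq
    have : e₀ ≠ e := fun h => hunc (h ▸ (Finset.mem_filter.1 he).2)
    simp [redAlpha, redEdgeVert, this]
  refine ⟨insert (redAlpha V, redEdgeVert e₀) M,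
    hM.insert ((mem_induce_redPi_edges E S).2 (Or.inr ⟨e₀, he₀, rfl⟩)) hdisj, ?_⟩
  rw [Finset.card_insert_of_notMem fun h => (hdisj _ h).1 rfl, if_neg hc, hcard]
  exact Nat.cast_succ _

theorem nu_induce_redPi : (((redGraph E).induce (redPi E S)).nu : ℝ) =
    (coveredEdges E S).card + if IsVCover E S then 0 else 1 := by
  obtain ⟨M, hM, hcard⟩ := exists_isMatching_card_coveredEdges_add E S
  rw [nu_eq_of_sum_eq_card (wf_induce_redPi E S) (isFracCover_coverWeight E S) hM
    (by rw [induce_redPi_verts, sum_redPi_coverWeight, hcard]), hcard]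

theorem coverWeight_mem_core : coverWeight E S ∈ ((redGraph E).induce (redPi E S)).core :=
  mem_core_iff.2 ⟨isFracCover_coverWeight E S, by
    rw [induce_redPi_verts, sum_redPi_coverWeight, nu_induce_redPi]⟩

theorem apply_redAlpha_le_of_mem_core {y : RedVert V → ℝ}
    (hy : y ∈ ((redGraph E).induce (redPi E S)).core) :
    y (redAlpha V) ≤ if IsVCover E S then 0 else 1 := by
  obtain ⟨hy, hsum⟩ := mem_core_iff.1 hy
  obtain ⟨M, hM, hcard, hshape⟩ := exists_isMatching_card_coveredEdges E S
  have hα : ∀ p ∈ M, p.1 ∉ ({redAlpha V} : Finset (RedVert V)) ∧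
      p.2 ∉ ({redAlpha V} : Finset (RedVert V)) := by
    intro p hp
    obtain ⟨e, -, c, rfl⟩ := hshape p hp
    simp [redAlpha, redEdgeVert]
  have := hM.card_add_sum_le (wf_induce_redPi E S) hy
    (by simp [induce_redPi_verts, mem_redPi]) hα
  rw [Finset.sum_singleton, hsum, nu_induce_redPi, hcard] at this
  linarith

theorem sInf_image_core_induce_redPi :
    sInf ((fun y : RedVert V → ℝ => 1 - y (redAlpha V)) ''
      ((redGraph E).induce (redPi E S)).core) = if IsVCover E S then 1 else 0 := by
  refine IsLeast.csInf_eq ⟨⟨coverWeight E S, coverWeight_mem_core E S, ?_⟩, ?_⟩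
  · by_cases hc : IsVCover E S <;> simp [coverWeight, redAlpha, hc]
  · rintro _ ⟨y, hy, rfl⟩
    have := apply_redAlpha_le_of_mem_core E S hy
    split_ifs at this ⊢ <;> dsimp only <;> linarith

end

theorem redGraph_sum_counts_vertexCovers_general (E : Finset (Sym2 V)) :
    (∑ S ∈ (Finset.univ : Finset V).powerset,
        sInf ((fun y : RedVert V → ℝ => 1 - y (redAlpha V)) ''
          ((redGraph E).induce (redPi E S)).core))
      = ((Finset.univ : Finset V).powerset.filter fun S => IsVCover E S).card ∧
    (1 / (2 : ℝ) ^ Fintype.card V) * (∑ S ∈ (Finset.univ : Finset V).powerset,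
        sInf ((fun y : RedVert V → ℝ => 1 - y (redAlpha V)) ''
          ((redGraph E).induce (redPi E S)).core))
      = ((Finset.univ : Finset V).powerset.filter fun S => IsVCover E S).card
          / (2 : ℝ) ^ Fintype.card V := by
  simp only [sInf_image_core_induce_redPi, Finset.sum_boole, true_and]
  ring

/-- For any finite simple graph `G = (V, E)`,
`Σ_{S ⊆ V} min_{y ∈ core(G₀[Π(S)])} (1 - y_α)` equals the number of vertex covers of `G`;
equivalently, the expected value of `min_{y ∈ core(G₀[Π(S)])} (1 - y_α)` over a uniformly random
`S ⊆ V` equals `(number of vertex covers of G) / 2^{|V|}`. -/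
theorem redGraph_sum_counts_vertexCovers (E : Finset (Sym2 V)) (hE : ∀ e ∈ E, ¬ e.IsDiag) :
    (∑ S ∈ (Finset.univ : Finset V).powerset,
        sInf ((fun y : RedVert V → ℝ => 1 - y (redAlpha V)) ''
          ((redGraph E).induce (redPi E S)).core))
      = ((Finset.univ : Finset V).powerset.filter fun S => IsVCover E S).card ∧
    (1 / (2 : ℝ) ^ Fintype.card V) * (∑ S ∈ (Finset.univ : Finset V).powerset,
        sInf ((fun y : RedVert V → ℝ => 1 - y (redAlpha V)) ''
          ((redGraph E).induce (redPi E S)).core))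
      = ((Finset.univ : Finset V).powerset.filter fun S => IsVCover E S).card
          / (2 : ℝ) ^ Fintype.card V :=
  redGraph_sum_counts_vertexCovers_general E
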